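/- Let V be a type, E : V → V → Type a family (a graph with vertices V and edge sets E), W a type, F : W → W → Type a family, and r : ∀ w : W, F w w (so (W, F, r) is a reflexive graph). Consider the graph C(V,E) whose vertex type is Σ v : V, E v v and whose edge type between vertices p and q is E p.1 q.1. Then the map sending a pair (obj : W → Σ v : V, E v v, map : ∀ {w w' : W}, F w w' → E (obj w).1 (obj w').1) satisfying ∀ w : W, map (r w) = (obj w).2, to the pair (fun w => (obj w).1, map), is a bijection onto the set of all pairs (obj' : W → V, map' : ∀ {w w' : W}, F w w' → E (obj' w) (obj' w')). -/
import Mathlib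


universe u₁ u₂ u₃ u₄

/-- Let `(V, E)` be a graph and `(W, F, r)` a reflexive graph.  Consider the graph `C(V,E)`
with vertices `Σ v : V, E v v` and edges `E p.1 q.1` between `p` and `q`.  The map sending a
graph morphism `(W, F) → C(V,E)` that moreover sends the distinguished self-edge `r w` to the
distinguished self-loop of its target vertex, to the underlying graph morphism
`(W, F) → (V, E)`, is a bijection. -/
theorem reflexive_graph_hom_bijection
    {V : Type u₁} (E : V → V → Type u₂) {W : Type u₃} (F : W → W → Type u₄)
    (r : ∀ w : W, F w w) :
    Function.Bijective
      (fun p : { p : Σ obj : W → Σ v : V, E v v,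
                     ∀ ⦃w w' : W⦄, F w w' → E (obj w).1 (obj w').1 //
                   ∀ w : W, p.2 (r w) = (p.1 w).2 } =>
        (⟨fun w => (p.1.1 w).1, fun w w' e => p.1.2 e⟩ :
          Σ obj' : W → V, ∀ ⦃w w' : W⦄, F w w' → E (obj' w) (obj' w'))) := by
  apply Function.bijective_iff_has_inverse.2
  refine ⟨fun q => ⟨⟨fun w => ⟨q.1 w, q.2 (r w)⟩, fun w w' e => q.2 e⟩, fun w => rfl⟩, ?_, ?_⟩
  · rintro ⟨⟨obj, map⟩, h⟩
    apply Subtype.ext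
    dsimp only
    have hfun : (fun w => (⟨(obj w).1, map (r w)⟩ : Σ v : V, E v v)) = obj :=
      funext fun w => by rw [show map (r w) = (obj w).2 from h w]
    exact Sigma.ext hfun HEq.rfl
  · rintro ⟨obj', map'⟩
    rfl
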